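/- The ESBIII distribution is heavy-tailed: for every λ > 0, lim_{x→∞} e^{λx} (1 - F(x)) = ∞, where F is the ESBIII CDF. -/

import Mathlib

/-!
For `x ≥ 0` the tail is `1 - F(x) = ((1+ε)/2) (1 - (1+t)^{-k})` with `t = (x/(1+ε))^{-c} → 0`.
Since `s ↦ (1+s)^{-k}` has derivative `-k` at `0`, the tail is asymptotically equivalent to
`((1+ε)/2) k (x/(1+ε))^{-c}`, a constant times `x^{-c}`, and `e^{λx}` beats every power of `x`.
-/

open Real Filter

noncomputable def esbiiiCDF (c k ε : ℝ) (x : ℝ) : ℝ :=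
  if 0 ≤ x then (1 - ε) / 2 + ((1 + ε) / 2) * (1 + (x / (1 + ε)) ^ (-c)) ^ (-k)
  else ((1 - ε) / 2) * (1 - (1 + (-x / (1 - ε)) ^ (-c)) ^ (-k))

open Asymptotics Topology

theorem isEquivalent_one_sub_one_add_rpow_neg {k : ℝ} (hk : k ≠ 0) :
    (fun s : ℝ => 1 - (1 + s) ^ (-k)) ~[𝓝 0] fun s => k * s := by
  have hderiv : HasDerivAt (fun s : ℝ => (1 + s) ^ (-k)) (-k) 0 := by
    simpa using ((hasDerivAt_id (0 : ℝ)).const_add 1).rpow_const (p := -k) (by norm_num)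
  have hlin : (fun s : ℝ => s) =O[𝓝 0] fun s => k * s :=
    (isBigO_const_mul_self k⁻¹ _ _).congr_left fun s => by field_simp
  refine (hderiv.isLittleO.trans_isBigO (by simpa using hlin)).neg_left.congr_left fun s => ?_
  simp only [add_zero, one_rpow, sub_zero, smul_eq_mul, mul_neg, sub_neg_eq_add, neg_add_rev,
    neg_sub, Pi.sub_apply]
  ring

theorem one_sub_esbiiiCDF_of_nonneg (c k ε : ℝ) {x : ℝ} (hx : 0 ≤ x) :
    1 - esbiiiCDF c k ε x = (1 + ε) / 2 * (1 - (1 + (x / (1 + ε)) ^ (-c)) ^ (-k)) := by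
  rw [esbiiiCDF, if_pos hx]
  ring

theorem one_sub_esbiiiCDF_isEquivalent {c k ε : ℝ} (hc : 0 < c) (hk : k ≠ 0) (hε : -1 < ε) :
    (fun x => 1 - esbiiiCDF c k ε x) ~[atTop]
      fun x => (1 + ε) / 2 * (k * (x / (1 + ε)) ^ (-c)) := by
  have hscale : Tendsto (fun x : ℝ => (x / (1 + ε)) ^ (-c)) atTop (𝓝 0) :=
    (tendsto_rpow_neg_atTop hc).comp (tendsto_id.atTop_div_const (by linarith))
  refine (IsEquivalent.refl.mul
    ((isEquivalent_one_sub_one_add_rpow_neg hk).comp_tendsto hscale)).congr_left ?_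
  filter_upwards [eventually_ge_atTop 0] with x hx
  exact (one_sub_esbiiiCDF_of_nonneg c k ε hx).symm

theorem tendsto_exp_mul_mul_div_rpow_neg_atTop {b a C : ℝ} (hb : 0 < b) (ha : 0 < a)
    (hC : 0 < C) (c : ℝ) : Tendsto (fun x => exp (b * x) * (C * (x / a) ^ (-c))) atTop atTop := by
  refine ((tendsto_exp_mul_div_rpow_atTop c b hb).const_mul_atTop
    (by positivity : 0 < C * a ^ c)).congr' ?_
  filter_upwards [eventually_gt_atTop 0] with x hx
  rw [rpow_neg (div_pos hx ha).le, div_rpow hx.le ha.le]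
  field_simp

theorem esbiii_heavy_tailed (c k ε : ℝ) (hc : 0 < c) (hk : 0 < k)
    (hε : ε ∈ Set.Ioo (-1 : ℝ) 1) :
    ∀ lam : ℝ, 0 < lam →
      Tendsto (fun x : ℝ => Real.exp (lam * x) * (1 - esbiiiCDF c k ε x)) atTop atTop := by
  intro lam hlam
  have hε' : 0 < 1 + ε := by linarith [hε.1]
  have htail := (IsEquivalent.refl (u := fun x => exp (lam * x))).mul
    (one_sub_esbiiiCDF_isEquivalent hc hk.ne' hε.1)
  refine htail.symm.tendsto_atTop ?_
  simpa only [Pi.mul_def, mul_assoc] using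
    tendsto_exp_mul_mul_div_rpow_neg_atTop hlam hε' (by positivity : 0 < (1 + ε) / 2 * k) c
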